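/- Let k ≥ 1, J a dyadic interval, μ = μ_J^λ, Ξ_J = {I_0 ⊇ ... ⊇ I_{2k}} the chain of dyadic subintervals with jp(J) ∈ I_i⁻ and |I_i| = 4|I_{i+1}|, and S = r·∑_{i=0}^{2k} ⟨μ, h_{I_i}⟩ h_{I_i} with r ∈ {+1,−1}. Then for every x in the left half of I(J) = I_{2k}, |S(x)| = (2k+1)λ/3. -/

import Mathlib

open MeasureTheory Set

/-- The dyadic interval `[2^k m, 2^k (m+1))`. -/
noncomputable def dyadicI (k m : ℤ) : Set ℝ := Set.Ico ((2:ℝ)^k * m) ((2:ℝ)^k * (m+1))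

/-- The "jumping point" of the dyadic interval `J = [2^n p, 2^n (p+1))`. -/
noncomputable def jp (n p : ℤ) : ℝ := (2:ℝ)^n * p + (2:ℝ)^n / 3

/-- The right endpoint of the dyadic interval `J = [2^n p, 2^n (p+1))`. -/
noncomputable def rep (n p : ℤ) : ℝ := (2:ℝ)^n * (p + 1)

/-- The `L²`-normalized Haar function of `dyadicI k m`. -/
noncomputable def haarF (k m : ℤ) (x : ℝ) : ℝ :=
  ((dyadicI (k-1) (2*m+1)).indicator (fun _ => (1:ℝ)) x
    - (dyadicI (k-1) (2*m)).indicator (fun _ => (1:ℝ)) x) / Real.sqrt ((2:ℝ)^k)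

/-- `⟨μ_J^λ, h_I⟩ = ∫ h_I dμ_J^λ`. -/
noncomputable def haarCoeff (n p : ℤ) (lam : ℝ) (km : ℤ × ℤ) : ℝ :=
  ∫ x in Set.Ico (jp n p) (rep n p), lam * haarF km.1 km.2 x

/-! Each `⟨μ, h_{I_i}⟩ h_{I_i}` equals `-λ/3` on the left half of `I_{2k}`. Since `|I_i| = 4^{-i}|J|`
and `4^i ≡ 1 (mod 3)`, the point `jp(J)` sits exactly one third of the way through every `I_i`;
hence `μ` charges `I_i⁻` with `λ|I_i|/6` and `I_i⁺` with `λ|I_i|/2`, so `⟨μ, h_{I_i}⟩ = λ√|I_i|/3`.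
The left halves `[jp(J) - |I_i|/3, jp(J) + |I_i|/6)` decrease with `i`, so `h_{I_i} = -1/√|I_i|`
on the left half of `I_{2k}`. -/

lemma volume_dyadicI (K m : ℤ) : volume (dyadicI K m) = ENNReal.ofReal (2 ^ K) := by
  rw [dyadicI, Real.volume_Ico]
  ring_nf

lemma two_zpow_sub_one_mul_two (K : ℤ) : (2 : ℝ) ^ (K - 1) * 2 = 2 ^ K := by
  rw [zpow_sub_one₀ two_ne_zero, inv_mul_cancel_right₀ two_ne_zero]

lemma dyadicI_sub_one_two_mul (K m : ℤ) :
    dyadicI (K - 1) (2 * m) = Ico ((2 : ℝ) ^ K * m) (2 ^ K * m + 2 ^ K / 2) := by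
  have h := two_zpow_sub_one_mul_two K
  rw [dyadicI]
  push_cast
  congr 1
  · linear_combination (m : ℝ) * h
  · linear_combination (m + 1 / 2 : ℝ) * h

lemma dyadicI_sub_one_two_mul_add_one (K m : ℤ) :
    dyadicI (K - 1) (2 * m + 1) = Ico ((2 : ℝ) ^ K * m + 2 ^ K / 2) (2 ^ K * (m + 1)) := by
  have h := two_zpow_sub_one_mul_two K
  rw [dyadicI]
  push_cast
  congr 1
  · linear_combination (m + 1 / 2 : ℝ) * h
  · linear_combination (m + 1 : ℝ) * h

lemma haarF_of_mem_left_half {K m : ℤ} {x : ℝ} (hx : x ∈ dyadicI (K - 1) (2 * m)) :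
    haarF K m x = -1 / √(2 ^ K) := by
  have hx' : x ∉ dyadicI (K - 1) (2 * m + 1) := by
    rw [dyadicI_sub_one_two_mul] at hx
    rw [dyadicI_sub_one_two_mul_add_one]
    exact fun h ↦ h.1.not_gt hx.2
  rw [haarF, indicator_of_mem hx, indicator_of_notMem hx']
  ring

lemma setIntegral_haarF {s : Set ℝ} (hs : volume s ≠ ⊤) (K m : ℤ) :
    ∫ x in s, haarF K m x
      = (volume.real (s ∩ dyadicI (K - 1) (2 * m + 1))
          - volume.real (s ∩ dyadicI (K - 1) (2 * m))) / √(2 ^ K) := by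
  have hint (a b : ℤ) : IntegrableOn ((dyadicI a b).indicator fun _ ↦ (1 : ℝ)) s :=
    (integrableOn_const hs).indicator measurableSet_Ico
  have hind (a b : ℤ) :
      ∫ x in s, (dyadicI a b).indicator (fun _ ↦ (1 : ℝ)) x = volume.real (s ∩ dyadicI a b) := by
    rw [dyadicI, setIntegral_indicator measurableSet_Ico, setIntegral_const, smul_eq_mul, mul_one]
  simp only [haarF, integral_div, integral_sub (hint _ _) (hint _ _), hind]

lemma haarCoeff_eq {n p K m : ℤ} (lam : ℝ) (hK : K ≤ n)
    (hjp : jp n p = 2 ^ K * m + 2 ^ K / 3) :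
    haarCoeff n p lam (K, m) = lam * √(2 ^ K) / 3 := by
  have hpos : (0 : ℝ) < 2 ^ K := zpow_pos two_pos K
  have hrep : 2 ^ K * ((m : ℝ) + 1) ≤ rep n p := by
    have : (2 : ℝ) ^ K ≤ 2 ^ n := zpow_le_zpow_right₀ one_le_two hK
    have : rep n p = jp n p + 2 / 3 * 2 ^ n := by rw [rep, jp]; ring
    linarith
  have hplus : Ico (jp n p) (rep n p) ∩ dyadicI (K - 1) (2 * m + 1)
      = dyadicI (K - 1) (2 * m + 1) := by
    rw [dyadicI_sub_one_two_mul_add_one]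
    exact inter_eq_right.2 (Ico_subset_Ico (by linarith) hrep)
  have hminus : Ico (jp n p) (rep n p) ∩ dyadicI (K - 1) (2 * m)
      = Ico (jp n p) (2 ^ K * m + 2 ^ K / 2) := by
    rw [dyadicI_sub_one_two_mul, Ico_inter_Ico, max_eq_left (by linarith),
      min_eq_right (by linarith)]
  rw [haarCoeff, integral_const_mul, setIntegral_haarF (by simp [Real.volume_Ico]), hplus, hminus,
    dyadicI_sub_one_two_mul_add_one, Real.volume_real_Ico, Real.volume_real_Ico,
    max_eq_left (by linarith), max_eq_left (by linarith), hjp]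
  rw [show (2 : ℝ) ^ K * (m + 1) - (2 ^ K * m + 2 ^ K / 2)
      - (2 ^ K * m + 2 ^ K / 2 - (2 ^ K * m + 2 ^ K / 3)) = 2 ^ K / 3 by ring,
    div_right_comm, Real.div_sqrt]
  ring

lemma eq_add_two_of_volume_dyadicI_eq_four_mul {K m K' m' : ℤ}
    (h : volume (dyadicI K m) = 4 * volume (dyadicI K' m')) : K = K' + 2 := by
  rw [volume_dyadicI, volume_dyadicI, ← ENNReal.ofReal_ofNat 4,
    ← ENNReal.ofReal_mul (by norm_num),
    ENNReal.ofReal_eq_ofReal_iff (zpow_pos two_pos _).le (by positivity)] at h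
  apply zpow_right_injective₀ two_pos (by norm_num : (2 : ℝ) ≠ 1)
  show (2 : ℝ) ^ K = 2 ^ (K' + 2)
  rw [zpow_add₀ two_ne_zero, h]
  norm_num [mul_comm]

lemma fst_eq_sub_two_mul_of_volume_dyadicI {N : ℕ} {n : ℤ} {c : Fin (N + 1) → ℤ × ℤ}
    (h0 : (c 0).1 = n)
    (hlen : ∀ i : Fin N, volume (dyadicI (c i.castSucc).1 (c i.castSucc).2)
      = 4 * volume (dyadicI (c i.succ).1 (c i.succ).2))
    (i : Fin (N + 1)) : (c i).1 = n - 2 * (i : ℕ) := by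
  induction i using Fin.induction with
  | zero => simpa using h0
  | succ j ih =>
    have := eq_add_two_of_volume_dyadicI_eq_four_mul (hlen j)
    simp only [Fin.val_castSucc] at ih
    simp only [Fin.val_succ]
    omega

lemma jp_eq_of_mem_left_half {n p K m : ℤ} {i : ℕ} (hK : n = K + 2 * i)
    (hmem : jp n p ∈ dyadicI (K - 1) (2 * m)) : jp n p = 2 ^ K * m + 2 ^ K / 3 := by
  obtain ⟨u, hu⟩ : (3 : ℤ) ∣ 4 ^ i - 1 := by simpa using sub_dvd_pow_sub_pow (4 : ℤ) 1 i
  have h4 : ((2 : ℝ) ^ (2 : ℤ)) ^ i = 3 * u + 1 := by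
    norm_num
    exact_mod_cast (by linarith : (4 : ℤ) ^ i = 3 * u + 1)
  set N : ℤ := (3 * u + 1) * p + u
  have hjp : jp n p = 2 ^ K * (N + 1 / 3) := by
    rw [jp, hK, zpow_add₀ two_ne_zero, zpow_mul, zpow_natCast, h4]
    push_cast [N]
    ring
  have hpos : (0 : ℝ) < 2 ^ K := zpow_pos two_pos K
  rw [dyadicI_sub_one_two_mul, mem_Ico, hjp] at hmem
  have hlo : (m : ℝ) < N + 1 := by nlinarith [hmem.1]
  have hhi : (N : ℝ) < m + 1 := by nlinarith [hmem.2]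
  have hNm : N = m := le_antisymm (Int.lt_add_one_iff.1 (by exact_mod_cast hhi))
    (Int.lt_add_one_iff.1 (by exact_mod_cast hlo))
  rw [hjp, hNm]
  ring

lemma mem_left_half_of_mem_left_half {a : ℝ} {K m K' m' : ℤ} (hKK' : K' ≤ K)
    (ha : a = 2 ^ K * m + 2 ^ K / 3) (ha' : a = 2 ^ K' * m' + 2 ^ K' / 3) {x : ℝ}
    (hx : x ∈ dyadicI (K' - 1) (2 * m')) : x ∈ dyadicI (K - 1) (2 * m) := by
  have : (2 : ℝ) ^ K' ≤ 2 ^ K := zpow_le_zpow_right₀ one_le_two hKK'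
  rw [dyadicI_sub_one_two_mul, mem_Ico] at hx ⊢
  constructor <;> linarith [hx.1, hx.2]

theorem stmt5_general (k : ℕ) (n p : ℤ) (lam r : ℝ) (hlam : 0 < lam)
    (hr : r = 1 ∨ r = -1)
    (c : Fin (2*k+1) → ℤ × ℤ)
    (h0 : c 0 = (n, p))
    (hjp : ∀ i, jp n p ∈ dyadicI ((c i).1 - 1) (2 * (c i).2))
    (hlen : ∀ i : Fin (2*k),
      volume (dyadicI (c i.castSucc).1 (c i.castSucc).2)
        = 4 * volume (dyadicI (c i.succ).1 (c i.succ).2))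
    (x : ℝ)
    (hx : x ∈ dyadicI ((c (Fin.last (2*k))).1 - 1) (2 * (c (Fin.last (2*k))).2)) :
    |r * ∑ i : Fin (2*k+1), haarCoeff n p lam (c i) * haarF (c i).1 (c i).2 x|
      = (2 * (k:ℝ) + 1) * lam / 3 := by
  have hK i : (c i).1 = n - 2 * (i : ℕ) :=
    fst_eq_sub_two_mul_of_volume_dyadicI (by rw [h0]) hlen i
  have hthird i : jp n p = 2 ^ (c i).1 * (c i).2 + 2 ^ (c i).1 / 3 :=
    jp_eq_of_mem_left_half (by rw [hK i]; ring) (hjp i)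
  have hterm i : haarCoeff n p lam (c i) * haarF (c i).1 (c i).2 x = -(lam / 3) := by
    have hxi := mem_left_half_of_mem_left_half (by rw [hK, hK, Fin.val_last]; omega) (hthird i)
      (hthird _) hx
    have : √(2 ^ (c i).1 : ℝ) ≠ 0 := (Real.sqrt_pos.2 (zpow_pos two_pos _)).ne'
    rw [haarCoeff_eq lam (by rw [hK i]; omega) (hthird i), haarF_of_mem_left_half hxi]
    field_simp
  have hr1 : |r| = 1 := by rcases hr with rfl | rfl <;> simp
  simp only [hterm, Finset.sum_const, Finset.card_univ, Fintype.card_fin, nsmul_eq_mul, abs_mul,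
    hr1, abs_neg, Nat.abs_cast, abs_div, abs_of_pos hlam]
  push_cast
  ring

/-- On the left half of `I(J) = I_{2k}`, the Haar multiplier
`S = r ∑_{i=0}^{2k} ⟨μ, h_{I_i}⟩ h_{I_i}` applied to `μ = μ_J^λ` has
absolute value exactly `(2k+1)λ/3`. -/
theorem stmt5 (k : ℕ) (hk : 1 ≤ k) (n p : ℤ) (lam r : ℝ) (hlam : 0 < lam)
    (hr : r = 1 ∨ r = -1)
    (c : Fin (2*k+1) → ℤ × ℤ)
    (h0 : c 0 = (n, p))
    (hjp : ∀ i, jp n p ∈ dyadicI ((c i).1 - 1) (2 * (c i).2))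
    (hnest : ∀ i : Fin (2*k),
      dyadicI (c i.succ).1 (c i.succ).2 ⊆ dyadicI (c i.castSucc).1 (c i.castSucc).2)
    (hlen : ∀ i : Fin (2*k),
      volume (dyadicI (c i.castSucc).1 (c i.castSucc).2)
        = 4 * volume (dyadicI (c i.succ).1 (c i.succ).2))
    (x : ℝ)
    (hx : x ∈ dyadicI ((c (Fin.last (2*k))).1 - 1) (2 * (c (Fin.last (2*k))).2)) :
    |r * ∑ i : Fin (2*k+1), haarCoeff n p lam (c i) * haarF (c i).1 (c i).2 x|
      = (2 * (k:ℝ) + 1) * lam / 3 :=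
  stmt5_general k n p lam r hlam hr c h0 hjp hlen x hx
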